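/- arXiv:1601.06239 — 2 statements merged into one kernel-verified Lean document; each statement's English description precedes it below -/
import Mathlib

section
/- Negative result for AVM-LAR: for any h ≥ (1/2)(n+2)^{-1/d} there exist a marginal distribution ρ_X and regression function f_ρ ≡ M such that the averaged divide-and-conquer local average estimator f̄_h built from m blocks of n samples satisfies E[‖f̄_h - f_ρ‖_ρ^2] ≥ M^2((2h)^{-d} - 2)/(3n). -/
open MeasureTheory Metric
open scoped ENNReal Classical

lemma uniformAtoms_apply {K : ℕ} {α : Type*} [MeasurableSpace α] [MeasurableSingletonClass α]
    (c : Fin K → α) (s : Set α) (hs : MeasurableSet s) :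
    ((K : ℝ≥0∞)⁻¹ • (∑ k : Fin K, Measure.dirac (c k))) s
      = (K : ℝ≥0∞)⁻¹ * ∑ k : Fin K, Set.indicator s (fun _ => (1:ℝ≥0∞)) (c k) := by
  rw [Measure.smul_apply, Measure.finset_sum_apply, smul_eq_mul]
  congr 1
  exact Finset.sum_congr rfl fun k _ => Measure.dirac_apply' _ hs

set_option maxHeartbeats 2000000 in
/-- Negative result for AVM-LAR: for any `h ≥ (1/2)(n+2)^{-1/d}` and any local average
weights supported on the ball of radius `h` (with the convention that a block whose
samples all lie farther than `h` from `x` contributes `0`, so the weights of a block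
sum to at most `1`), there is a marginal distribution `ρ_X` such that, with regression
function `f_ρ ≡ M` (so `Y = M` a.s.), the averaged divide-and-conquer estimator built
from `m` blocks of `n` samples has error at least `M²((2h)^{-d} - 2)/(3n)`. -/
theorem stmt17 {d m n : ℕ} (hd : 0 < d) (hm : 0 < m) (hn : 0 < n)
    (M h : ℝ) (hM : 0 < M)
    (hh : (1 / 2) * ((n : ℝ) + 2) ^ (-(1 / d : ℝ)) ≤ h)
    (W : (Fin n → EuclideanSpace ℝ (Fin d)) → Fin n → EuclideanSpace ℝ (Fin d) → ℝ)
    (hW0 : ∀ z i x, 0 ≤ W z i x)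
    (hWsum : ∀ z x, ∑ i, W z i x ≤ 1)
    (hloc : ∀ z i x, h < dist x (z i) → W z i x = 0) :
    ∃ ρX : Measure (EuclideanSpace ℝ (Fin d)), IsProbabilityMeasure ρX ∧
      M ^ 2 * ((2 * h) ^ (-(d : ℝ)) - 2) / (3 * n)
        ≤ ∫ p : (Fin m → Fin n → EuclideanSpace ℝ (Fin d)) × EuclideanSpace ℝ (Fin d),
            ((m : ℝ)⁻¹ * ∑ j, ∑ i, W (p.1 j) i p.2 * M - M) ^ 2
          ∂((Measure.pi fun _ : Fin m => Measure.pi fun _ : Fin n => ρX).prod ρX) := by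
  have hdR : (0:ℝ) < d := by exact_mod_cast hd
  have hh0 : 0 < h := lt_of_lt_of_le (by positivity) hh
  -- (2h)^{-d} ≤ n + 2
  have hpow : (2*h) ^ (-(d:ℝ)) ≤ (n:ℝ) + 2 := by
    have h1 : ((n:ℝ)+2) ^ (-(1/d : ℝ)) ≤ 2*h := by linarith
    have hx : 0 < ((n:ℝ)+2) ^ (-(1/d:ℝ)) := Real.rpow_pos_of_pos (by positivity) _
    calc (2*h)^(-(d:ℝ)) ≤ (((n:ℝ)+2) ^ (-(1/d:ℝ))) ^ (-(d:ℝ)) :=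
          Real.rpow_le_rpow_of_nonpos hx h1 (by simp [hdR.le])
      _ = ((n:ℝ)+2) ^ ((-(1/d:ℝ)) * (-(d:ℝ))) := by
          rw [← Real.rpow_mul (by positivity)]
      _ = (n:ℝ)+2 := by
          rw [show (-(1/d:ℝ)) * (-(d:ℝ)) = 1 by field_simp, Real.rpow_one]
  set K := 3 * m * n with hKdef
  have hKpos : 0 < K := by positivity
  have hK0 : (K:ℝ≥0∞) ≠ 0 := by exact_mod_cast hKpos.ne'
  have hKtop : (K:ℝ≥0∞) ≠ ⊤ := ENNReal.natCast_ne_top K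
  -- the atoms
  set i0 : Fin d := ⟨0, hd⟩ with hi0
  set c : Fin K → EuclideanSpace ℝ (Fin d) :=
    fun k => EuclideanSpace.single i0 ((k:ℝ) * (2*h+1)) with hc
  have hcdist : ∀ j k : Fin K, j ≠ k → h < dist (c j) (c k) := by
    intro j k hjk
    have hne : ((j:ℕ):ℝ) ≠ ((k:ℕ):ℝ) := by
      exact_mod_cast fun hc' => hjk (Fin.val_injective hc')
    have h1 : (1:ℝ) ≤ |((j:ℕ):ℝ) - ((k:ℕ):ℝ)| := by
      have : ((j:ℕ):ℤ) ≠ ((k:ℕ):ℤ) := by exact_mod_cast hne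
      have h2 : (1:ℤ) ≤ |((j:ℕ):ℤ) - ((k:ℕ):ℤ)| := Int.one_le_abs (sub_ne_zero.mpr this)
      calc (1:ℝ) = ((1:ℤ):ℝ) := by norm_num
        _ ≤ ((|((j:ℕ):ℤ) - ((k:ℕ):ℤ)| : ℤ) : ℝ) := by exact_mod_cast h2
        _ = |((j:ℕ):ℝ) - ((k:ℕ):ℝ)| := by push_cast; ring_nf
    have hde : dist (c j) (c k) = |((j:ℕ):ℝ) - ((k:ℕ):ℝ)| * (2*h+1) := by
      rw [hc]
      simp only [EuclideanSpace.dist_single_same, Real.dist_eq, ← sub_mul, abs_mul]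
      rw [abs_of_pos (show (0:ℝ) < 2*h+1 by linarith)]
    rw [hde]
    nlinarith
  have hcinj : Function.Injective c := by
    intro j k e
    by_contra hne
    have := hcdist j k hne
    rw [e, dist_self] at this
    linarith
  -- the measure
  set ρ : Measure (EuclideanSpace ℝ (Fin d)) :=
    (K : ℝ≥0∞)⁻¹ • (∑ k : Fin K, Measure.dirac (c k)) with hρ
  have hρuniv : ρ Set.univ = 1 := by
    rw [hρ, uniformAtoms_apply c _ MeasurableSet.univ]
    simp [Set.indicator_of_mem (Set.mem_univ _), ENNReal.inv_mul_cancel hK0 hKtop]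
  haveI hρP : IsProbabilityMeasure ρ := ⟨hρuniv⟩
  refine ⟨ρ, hρP, ?_⟩
  haveI hMSC : MeasurableSingletonClass (EuclideanSpace ℝ (Fin d)) :=
    ⟨fun x => isClosed_singleton.measurableSet⟩

  -- notation
  set μP : Measure (Fin m → Fin n → EuclideanSpace ℝ (Fin d)) :=
    Measure.pi fun _ : Fin m => Measure.pi fun _ : Fin n => ρ with hμP
  set μ : Measure ((Fin m → Fin n → EuclideanSpace ℝ (Fin d)) × EuclideanSpace ℝ (Fin d)) :=
    μP.prod ρ with hμ
  haveI hpin : IsProbabilityMeasure (Measure.pi fun _ : Fin n => ρ) :=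
    MeasureTheory.Measure.pi.instIsProbabilityMeasure (fun _ : Fin n => ρ)
  haveI : IsProbabilityMeasure μP := by rw [hμP]; infer_instance
  haveI : IsProbabilityMeasure μ := by rw [hμ]; infer_instance
  -- the event that every sample of every block is far from x
  set A : Set ((Fin m → Fin n → EuclideanSpace ℝ (Fin d)) × EuclideanSpace ℝ (Fin d)) :=
    {p | ∀ j i, h < dist p.2 (p.1 j i)} with hA
  have hAmeas : MeasurableSet A := by
    have hA' : A = ⋂ (j : Fin m) (i : Fin n),
        {p : (Fin m → Fin n → EuclideanSpace ℝ (Fin d)) × EuclideanSpace ℝ (Fin d) |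
          h < dist p.2 (p.1 j i)} := by
      ext p; simp [hA, Set.mem_iInter]
    rw [hA']
    refine MeasurableSet.iInter fun j => MeasurableSet.iInter fun i => ?_
    exact measurableSet_lt measurable_const
      (measurable_snd.dist
        ((measurable_pi_apply i).comp ((measurable_pi_apply j).comp measurable_fst)))
  -- atomic measure computations
  have hρball : ∀ k, ρ (Metric.closedBall (c k) h) = (K:ℝ≥0∞)⁻¹ := by
    intro k
    rw [hρ, uniformAtoms_apply c _ measurableSet_closedBall]
    have he : ∑ j : Fin K, Set.indicator (Metric.closedBall (c k) h) (fun _ => (1:ℝ≥0∞)) (c j) = 1 := by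
      rw [Finset.sum_eq_single k]
      · exact Set.indicator_of_mem (Metric.mem_closedBall.mpr (by rw [dist_self]; linarith)) _
      · intro j _ hne
        exact Set.indicator_of_notMem
          (fun hj => absurd (Metric.mem_closedBall.mp hj) (not_le.mpr (hcdist j k hne))) _
      · intro hmem; exact absurd (Finset.mem_univ _) hmem
    rw [he, mul_one]
  have hρS : ∀ k, ρ ((Metric.closedBall (c k) h)ᶜ) = 1 - (K:ℝ≥0∞)⁻¹ := by
    intro k
    rw [measure_compl measurableSet_closedBall (measure_ne_top ρ _), hρball k, measure_univ]
  have hsing : ∀ k, ρ ({c k} : Set (EuclideanSpace ℝ (Fin d))) = (K:ℝ≥0∞)⁻¹ := by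
    intro k
    rw [hρ, uniformAtoms_apply c _ (measurableSet_singleton _)]
    have he : ∑ j : Fin K, Set.indicator ({c k} : Set (EuclideanSpace ℝ (Fin d))) (fun _ => (1:ℝ≥0∞)) (c j) = 1 := by
      rw [Finset.sum_eq_single k]
      · exact Set.indicator_of_mem (s := ({c k} : Set (EuclideanSpace ℝ (Fin d)))) rfl _
      · intro j _ hne
        exact Set.indicator_of_notMem (s := ({c k} : Set (EuclideanSpace ℝ (Fin d))))
          (fun hj => hne (hcinj (Set.mem_singleton_iff.mp hj))) _
      · intro hmem; exact absurd (Finset.mem_univ _) hmem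
    rw [he, mul_one]
  -- the disjoint rectangles inside A
  set D : Fin K → Set ((Fin m → Fin n → EuclideanSpace ℝ (Fin d)) × EuclideanSpace ℝ (Fin d)) :=
    fun k => (Set.univ.pi fun _ : Fin m => Set.univ.pi fun _ : Fin n =>
      (Metric.closedBall (c k) h)ᶜ) ×ˢ ({c k} : Set (EuclideanSpace ℝ (Fin d))) with hD
  have hDmeas : ∀ k, MeasurableSet (D k) := fun k =>
    (MeasurableSet.univ_pi fun _ => MeasurableSet.univ_pi fun _ =>
      measurableSet_closedBall.compl).prod (measurableSet_singleton _)
  have hDsub : ∀ k, D k ⊆ A := by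
    rintro k ⟨z, x⟩ ⟨hz, hx⟩
    simp only [Set.mem_pi, Set.mem_univ, true_implies] at hz
    simp only [Set.mem_singleton_iff] at hx
    subst hx
    intro j i
    have h2 := hz j i
    rw [Set.mem_compl_iff, Metric.mem_closedBall, not_le] at h2
    rwa [dist_comm] at h2
  have hDdisj : (↑(Finset.univ : Finset (Fin K)) : Set (Fin K)).PairwiseDisjoint D := by
    intro a _ b _ hab
    refine Set.disjoint_left.mpr ?_
    rintro ⟨z, x⟩ ⟨_, hx1⟩ ⟨_, hx2⟩
    simp only [Set.mem_singleton_iff] at hx1 hx2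
    exact hab (hcinj (hx1.symm.trans hx2))
  have hDval : ∀ k, μ (D k) = (1 - (K:ℝ≥0∞)⁻¹) ^ (n*m) * (K:ℝ≥0∞)⁻¹ := by
    intro k
    rw [hμ, hD]
    rw [Measure.prod_prod, hμP, Measure.pi_pi]
    simp only [Measure.pi_pi]
    rw [hsing k]
    simp only [hρS k, Finset.prod_const, Finset.card_univ, Fintype.card_fin]
    rw [← pow_mul]
  have hAlow : (1 - (K:ℝ≥0∞)⁻¹) ^ (n*m) ≤ μ A := by
    have h1 : μ (⋃ k ∈ (Finset.univ : Finset (Fin K)), D k) = ∑ k : Fin K, μ (D k) :=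
      measure_biUnion_finset hDdisj (fun k _ => hDmeas k)
    have h2 : (⋃ k ∈ (Finset.univ : Finset (Fin K)), D k) ⊆ A := by
      refine Set.iUnion_subset fun k => Set.iUnion_subset fun _ => hDsub k
    have h3 : ∑ k : Fin K, μ (D k) = (1 - (K:ℝ≥0∞)⁻¹) ^ (n*m) := by
      simp only [hDval, Finset.sum_const, Finset.card_univ, Fintype.card_fin, nsmul_eq_mul]
      rw [mul_comm ((1 - (K:ℝ≥0∞)⁻¹) ^ (n*m)) ((K:ℝ≥0∞)⁻¹), ← mul_assoc,
        ENNReal.mul_inv_cancel hK0 hKtop, one_mul]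
    calc (1 - (K:ℝ≥0∞)⁻¹) ^ (n*m) = ∑ k : Fin K, μ (D k) := h3.symm
      _ = μ (⋃ k ∈ (Finset.univ : Finset (Fin K)), D k) := h1.symm
      _ ≤ μ A := measure_mono h2
  have hAreal : (1:ℝ)/3 ≤ (μ A).toReal := by
    have h1 : ((1 - (K:ℝ≥0∞)⁻¹) ^ (n*m)).toReal ≤ (μ A).toReal :=
      ENNReal.toReal_mono (measure_ne_top μ A) hAlow
    have h2 : ((1 - (K:ℝ≥0∞)⁻¹) ^ (n*m)).toReal = (1 - (K:ℝ)⁻¹)^(n*m) := by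
      rw [ENNReal.toReal_pow, ENNReal.toReal_sub_of_le (ENNReal.inv_le_one.mpr (by exact_mod_cast hKpos : (1:ℝ≥0∞) ≤ (K:ℝ≥0∞))) ENNReal.one_ne_top]
      rw [ENNReal.toReal_one, ENNReal.toReal_inv, ENNReal.toReal_natCast]
    have hK1R : (1:ℝ) ≤ (K:ℝ) := by exact_mod_cast hKpos
    have h3 : (1:ℝ) + ((n*m : ℕ):ℝ) * (-(K:ℝ)⁻¹) ≤ (1 + (-(K:ℝ)⁻¹))^(n*m) :=
      one_add_mul_le_pow (a := -(K:ℝ)⁻¹) (by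
        have : (K:ℝ)⁻¹ ≤ 1 := by
          rw [inv_le_one_iff₀]; right; exact hK1R
        linarith) (n*m)
    have h4 : ((n:ℝ)*m) * (K:ℝ)⁻¹ = 1/3 := by
      have hKR : (K:ℝ) = 3*m*n := by rw [hKdef]; push_cast; ring
      rw [hKR]
      have hmR : (0:ℝ) < m := by exact_mod_cast hm
      have hnR : (0:ℝ) < n := by exact_mod_cast hn
      field_simp
    have h5 : (1:ℝ)/3 ≤ (1 - (K:ℝ)⁻¹)^(n*m) := by
      have e1 : (1:ℝ) + ((n*m : ℕ):ℝ) * (-(K:ℝ)⁻¹) = 1 - ((n:ℝ)*m) * (K:ℝ)⁻¹ := by push_cast; ring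
      have e2 : (1:ℝ) + (-(K:ℝ)⁻¹) = 1 - (K:ℝ)⁻¹ := by ring
      rw [e1, e2, h4] at h3
      linarith
    linarith [h2 ▸ h1]
  -- the estimator error function
  set f : (Fin m → Fin n → EuclideanSpace ℝ (Fin d)) × EuclideanSpace ℝ (Fin d) → ℝ :=
    fun p => ((m : ℝ)⁻¹ * ∑ j, ∑ i, W (p.1 j) i p.2 * M - M) ^ 2 with hf
  have hfle : ∀ p, f p ≤ M^2 := by
    rintro ⟨z, x⟩
    have hs : ∀ j, (0:ℝ) ≤ ∑ i, W (z j) i x := fun j => Finset.sum_nonneg fun i _ => hW0 _ _ _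
    have hT0 : (0:ℝ) ≤ ∑ j, ∑ i, W (z j) i x := Finset.sum_nonneg fun j _ => hs j
    have hT1 : ∑ j, ∑ i, W (z j) i x ≤ (m:ℝ) := by
      calc ∑ j, ∑ i, W (z j) i x ≤ ∑ _j : Fin m, (1:ℝ) :=
            Finset.sum_le_sum fun j _ => hWsum _ _
        _ = m := by simp
    have hmpos : (0:ℝ) < m := by exact_mod_cast hm
    have hWM : ∑ j, ∑ i, W (z j) i x * M = (∑ j, ∑ i, W (z j) i x) * M := by
      simp [Finset.sum_mul]
    rw [hf]
    dsimp only
    rw [hWM]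
    set T := ∑ j, ∑ i, W (z j) i x with hT
    have hv0 : (0:ℝ) ≤ (m:ℝ)⁻¹ * T := mul_nonneg (by positivity) hT0
    have hv1 : (m:ℝ)⁻¹ * T ≤ 1 := by
      rw [inv_mul_le_iff₀ hmpos, mul_one]; exact hT1
    nlinarith [sq_nonneg M, mul_nonneg (mul_nonneg hv0 (by linarith : (0:ℝ) ≤ 2 - (m:ℝ)⁻¹ * T)) (sq_nonneg M)]
  have hfA : ∀ p ∈ A, f p = M^2 := by
    rintro ⟨z, x⟩ hp
    simp only [hA, Set.mem_setOf_eq] at hp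
    have hz : ∀ j i, W (z j) i x = 0 := fun j i => hloc _ _ _ (hp j i)
    simp [hf, hz]
  -- a.e. strong measurability via the finite support
  set Φ : (Fin m → Fin n → Fin K) × Fin K →
      (Fin m → Fin n → EuclideanSpace ℝ (Fin d)) × EuclideanSpace ℝ (Fin d) :=
    fun u => ((fun j i => c (u.1 j i)), c u.2) with hΦ
  have hΦinj : Function.Injective Φ := by
    rintro ⟨a, b⟩ ⟨a', b'⟩ e
    simp only [hΦ, Prod.mk.injEq] at e
    obtain ⟨e1, e2⟩ := e
    refine Prod.ext ?_ (hcinj e2)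
    funext j i
    exact hcinj (congrFun (congrFun e1 j) i)
  set g : (Fin m → Fin n → EuclideanSpace ℝ (Fin d)) × EuclideanSpace ℝ (Fin d) → ℝ :=
    fun p => ∑ u : (Fin m → Fin n → Fin K) × Fin K, if p = Φ u then f (Φ u) else 0 with hg
  have hgmeas : Measurable g := by
    refine Finset.measurable_sum _ fun u _ => ?_
    have he : (fun p => if p = Φ u then f (Φ u) else 0)
        = Set.indicator {Φ u} (fun _ => f (Φ u)) := by
      funext p; simp [Set.indicator_apply]
    rw [he]
    exact measurable_const.indicator (measurableSet_singleton _)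
  set Tgood : Set ((Fin m → Fin n → EuclideanSpace ℝ (Fin d)) × EuclideanSpace ℝ (Fin d)) :=
    (Set.univ.pi fun _ : Fin m => Set.univ.pi fun _ : Fin n => Set.range c) ×ˢ (Set.range c)
    with hTg
  have hTmeas : MeasurableSet Tgood :=
    (MeasurableSet.univ_pi fun _ => MeasurableSet.univ_pi fun _ =>
      (Set.finite_range c).measurableSet).prod (Set.finite_range c).measurableSet
  have hrange : ρ (Set.range c) = 1 := by
    rw [hρ, uniformAtoms_apply c _ ((Set.finite_range c).measurableSet)]
    have he : ∑ j : Fin K, Set.indicator (Set.range c) (fun _ => (1:ℝ≥0∞)) (c j) = K := by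
      rw [Finset.sum_congr rfl fun j _ => Set.indicator_of_mem (Set.mem_range_self j) _]
      simp
    rw [he, ENNReal.inv_mul_cancel hK0 hKtop]
  have hTone : μ Tgood = 1 := by
    rw [hμ, hTg, Measure.prod_prod, hμP, Measure.pi_pi]
    simp [Measure.pi_pi, hrange]
  have hTnull : μ Tgoodᶜ = 0 := by
    rw [measure_compl hTmeas (measure_ne_top _ _), hTone, measure_univ, tsub_self]
  have hfg : f =ᵐ[μ] g := by
    have hsub : {p | ¬ f p = g p} ⊆ Tgoodᶜ := by
      intro p hp
      simp only [Set.mem_compl_iff]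
      intro hpT
      apply hp
      obtain ⟨hz, hx⟩ := hpT
      simp only [Set.mem_pi, Set.mem_univ, true_implies] at hz
      obtain ⟨b, hb⟩ := hx
      choose a ha using fun j => fun i => hz j i
      have hpΦ : p = Φ (a, b) := by
        rw [hΦ]
        refine Prod.ext ?_ hb.symm
        funext j i
        exact (ha j i).symm
      simp only [hg]
      rw [Finset.sum_eq_single (a, b)]
      · rw [if_pos hpΦ, ← hpΦ]
      · intro u _ hu
        rw [if_neg]
        intro e
        exact hu (hΦinj (hpΦ.symm.trans e)).symm
      · intro hmem
        exact absurd (Finset.mem_univ _) hmem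
    rw [Filter.EventuallyEq, ae_iff]
    exact measure_mono_null hsub hTnull
  have hfaesm : AEStronglyMeasurable f μ := ⟨g, hgmeas.stronglyMeasurable, hfg⟩
  have hfint : Integrable f μ := by
    refine Integrable.mono' (integrable_const (M^2)) hfaesm ?_
    filter_upwards with p
    rw [Real.norm_eq_abs, abs_of_nonneg (by rw [hf]; positivity)]
    exact hfle p
  have hind : ∀ p, A.indicator (fun _ => M^2) p ≤ f p := by
    intro p
    by_cases hp : p ∈ A
    · rw [Set.indicator_of_mem hp, hfA p hp]
    · rw [Set.indicator_of_notMem hp, hf]; positivity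
  have hkey : M^2 * (μ A).toReal ≤ ∫ p, f p ∂μ := by
    have h1 := integral_mono_of_nonneg (μ := μ)
      (f := A.indicator fun _ => M^2) (g := f)
      (Filter.Eventually.of_forall fun p => Set.indicator_nonneg (fun _ _ => sq_nonneg M) p)
      hfint (Filter.Eventually.of_forall hind)
    rwa [integral_indicator_const _ hAmeas, smul_eq_mul, mul_comm] at h1
  have hfinal1 : M ^ 2 * ((2 * h) ^ (-(d : ℝ)) - 2) / (3 * n) ≤ M^2 * (1/3) := by
    have hn3 : (0:ℝ) < 3*n := by positivity
    rw [div_le_iff₀ hn3]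
    nlinarith [mul_nonneg (sq_nonneg M) (show (0:ℝ) ≤ (n:ℝ) + 2 - (2*h)^(-(d:ℝ)) by linarith)]
  calc M ^ 2 * ((2 * h) ^ (-(d : ℝ)) - 2) / (3 * n) ≤ M^2 * (1/3) := hfinal1
    _ ≤ M^2 * (μ A).toReal := by nlinarith [sq_nonneg M, hAreal]
    _ ≤ ∫ p, f p ∂μ := hkey
end

section
/- Probability that a ball around a random point is empty: if X, X_1, ..., X_N are i.i.d. ∼ ρ_X on a compact set X ⊆ [0,1]^d, then P(no X_i lies in B_h(X)) ≤ E[(1 - ρ_X(B_h(X)))^N] ≤ c/(N h^d) for a constant c depending only on d. -/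
/-!
Conditioning on the test point `x`, the `N` samples miss `B_h(x)` independently, each with
probability `1 - ρ(B_h(x))`, which gives the identity with `∫ (1 - ρ(B_h(x)))^N dρ(x)`.
For the bound, cover `[0,1]^d` by the `m^d ≤ (2√d/h)^d` balls `B` of radius `h/2` centred at the
cells of the grid of mesh `1/m`, `m = ⌈√d/h⌉`. For `x ∈ B` we have `B ⊆ B_h(x)`, so with
`p = ρ(B)` the ball `B` contributes at most `(1 - p)^N p ≤ 1/N` (Bernoulli:
`(1 - p)^N (1 + N p) ≤ (1 - p^2)^N ≤ 1`). When `h > √d` every `B_h(x)` with `x ∈ [0,1]^d`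
contains the whole support and the integral vanishes.
-/

open MeasureTheory Metric ENNReal

lemma one_sub_pow_mul_mul_le_one {q : ℝ} (h0 : 0 ≤ q) (h1 : q ≤ 1) (N : ℕ) :
    (1 - q) ^ N * q * N ≤ 1 :=
  calc (1 - q) ^ N * q * N ≤ (1 - q) ^ N * (1 + N * q) := by
        rw [mul_assoc]; gcongr; linarith
    _ ≤ (1 - q) ^ N * (1 + q) ^ N := by
        gcongr; exact one_add_mul_le_pow (by linarith) N
    _ = (1 - q ^ 2) ^ N := by rw [← mul_pow]; ring
    _ ≤ 1 := pow_le_one₀ (by nlinarith) (by nlinarith)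

lemma ENNReal.one_sub_pow_mul_le_inv {p : ℝ≥0∞} (hp : p ≤ 1) (N : ℕ) :
    (1 - p) ^ N * p ≤ (N : ℝ≥0∞)⁻¹ := by
  rw [ENNReal.le_inv_iff_mul_le]
  lift p to NNReal using ne_top_of_le_ne_top one_ne_top hp
  have hp' : p ≤ 1 := by exact_mod_cast hp
  rw [← ENNReal.coe_one, ← ENNReal.coe_sub]
  norm_cast
  rw [← NNReal.coe_le_coe]
  push_cast [hp']
  exact one_sub_pow_mul_mul_le_one p.2 hp' N

variable {E : Type*} [PseudoMetricSpace E] [MeasurableSpace E]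

lemma measurable_measure_closedBall [OpensMeasurableSpace E] [SecondCountableTopology E]
    (ρ : Measure E) [SFinite ρ] (h : ℝ) : Measurable fun x => ρ (closedBall x h) :=
  measurable_measure_prodMk_left (s := {p : E × E | dist p.2 p.1 ≤ h})
    (measurableSet_le (by fun_prop) measurable_const)

theorem measure_pi_forall_notMem_closedBall [OpensMeasurableSpace E] [SecondCountableTopology E]
    (ρ : Measure E) [IsProbabilityMeasure ρ] (N : ℕ) (h : ℝ) :
    Measure.pi (fun _ : Fin (N + 1) => ρ)
        {ω | ∀ i : Fin N, ω i.castSucc ∉ closedBall (ω (Fin.last N)) h}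
      = ∫⁻ x, (1 - ρ (closedBall x h)) ^ N ∂ρ := by
  let T : Set (E × (Fin N → E)) := {p | ∀ i, p.2 i ∉ closedBall p.1 h}
  have hT : MeasurableSet T := by
    simp only [T, Set.ofPred_forall, mem_closedBall, not_le]
    exact .iInter fun i => measurableSet_lt measurable_const (by fun_prop)
  have hpre : {ω : Fin (N + 1) → E | ∀ i : Fin N, ω i.castSucc ∉ closedBall (ω (Fin.last N)) h}
      = MeasurableEquiv.piFinSuccAbove (fun _ => E) (Fin.last N) ⁻¹' T := by
    ext ω
    simp [T, MeasurableEquiv.piFinSuccAbove, Fin.init]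
  have hfiber : ∀ x, Prod.mk x ⁻¹' T = Set.univ.pi fun _ => (closedBall x h)ᶜ := by
    intro x; ext y; simp [T]
  rw [hpre, (measurePreserving_piFinSuccAbove (fun _ => ρ) (Fin.last N)).measure_preimage_equiv,
    Measure.prod_apply hT]
  simp_rw [hfiber, Measure.pi_pi, prob_compl_eq_one_sub measurableSet_closedBall,
    Finset.prod_const, Finset.card_univ, Fintype.card_fin]

theorem integral_one_sub_measure_closedBall_pow [OpensMeasurableSpace E]
    [SecondCountableTopology E] (ρ : Measure E) [IsProbabilityMeasure ρ] (N : ℕ) (h : ℝ) :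
    ∫ x, (1 - (ρ (closedBall x h)).toReal) ^ N ∂ρ
      = (∫⁻ x, (1 - ρ (closedBall x h)) ^ N ∂ρ).toReal := by
  rw [← integral_toReal (((measurable_measure_closedBall ρ h).const_sub 1).pow_const N).aemeasurable
    (.of_forall fun x => pow_lt_top (tsub_le_self.trans_lt one_lt_top))]
  simp [ENNReal.toReal_sub_of_le prob_le_one one_ne_top]

theorem lintegral_one_sub_measure_closedBall_pow_le {ι : Type*} [Fintype ι] (ρ : Measure E)
    [IsProbabilityMeasure ρ] {z : ι → E} {h : ℝ}
    (hcover : ∀ᵐ x ∂ρ, x ∈ ⋃ k, closedBall (z k) (h / 2)) (N : ℕ) :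
    ∫⁻ x, (1 - ρ (closedBall x h)) ^ N ∂ρ ≤ Fintype.card ι * (N : ℝ≥0∞)⁻¹ := by
  have hball (k : ι) : ∫⁻ x in closedBall (z k) (h / 2), (1 - ρ (closedBall x h)) ^ N ∂ρ
      ≤ (N : ℝ≥0∞)⁻¹ := by
    have hsub : ∀ x ∈ closedBall (z k) (h / 2), closedBall (z k) (h / 2) ⊆ closedBall x h :=
      fun x hx => closedBall_subset_closedBall' (by rw [mem_closedBall'] at hx; linarith)
    calc ∫⁻ x in closedBall (z k) (h / 2), (1 - ρ (closedBall x h)) ^ N ∂ρ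
        ≤ ∫⁻ _ in closedBall (z k) (h / 2), (1 - ρ (closedBall (z k) (h / 2))) ^ N ∂ρ :=
          setLIntegral_mono measurable_const fun x hx => by gcongr; exact hsub x hx
      _ = (1 - ρ (closedBall (z k) (h / 2))) ^ N * ρ (closedBall (z k) (h / 2)) :=
          setLIntegral_const _ _
      _ ≤ (N : ℝ≥0∞)⁻¹ := one_sub_pow_mul_le_inv prob_le_one N
  calc ∫⁻ x, (1 - ρ (closedBall x h)) ^ N ∂ρ
      = ∫⁻ x in ⋃ k, closedBall (z k) (h / 2), (1 - ρ (closedBall x h)) ^ N ∂ρ := by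
        rw [Measure.restrict_eq_self_of_ae_mem hcover]
    _ ≤ ∑' k, ∫⁻ x in closedBall (z k) (h / 2), (1 - ρ (closedBall x h)) ^ N ∂ρ :=
        lintegral_iUnion_le _ _
    _ ≤ ∑' _ : ι, (N : ℝ≥0∞)⁻¹ := ENNReal.tsum_le_tsum hball
    _ = Fintype.card ι * (N : ℝ≥0∞)⁻¹ := by rw [tsum_fintype, Finset.sum_const, nsmul_eq_mul]; rfl

theorem lintegral_one_sub_measure_closedBall_pow_eq_zero (ρ : Measure E) {h : ℝ}
    (hfull : ∀ᵐ x ∂ρ, ρ (closedBall x h) = 1) {N : ℕ} (hN : N ≠ 0) :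
    ∫⁻ x, (1 - ρ (closedBall x h)) ^ N ∂ρ = 0 :=
  (lintegral_congr_ae (hfull.mono fun x hx => by simp [hx, hN])).trans lintegral_zero

theorem EuclideanSpace.dist_le_sqrt_card_mul {ι : Type*} [Fintype ι] {x y : EuclideanSpace ℝ ι}
    {r : ℝ} (hr : 0 ≤ r) (hxy : ∀ i, |x i - y i| ≤ r) : dist x y ≤ √(Fintype.card ι) * r :=
  calc dist x y = √(∑ i, dist (x i) (y i) ^ 2) := EuclideanSpace.dist_eq x y
    _ ≤ √(∑ _ : ι, r ^ 2) := by gcongr with i; exact hxy i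
    _ = √(Fintype.card ι) * r := by simp [Real.sqrt_mul, Real.sqrt_sq hr]

theorem exists_fin_abs_sub_midpoint_le {a : ℝ} (ha : a ∈ Set.Icc (0 : ℝ) 1) {m : ℕ} (hm : 0 < m) :
    ∃ j : Fin m, |a - (j + 1 / 2) / m| ≤ 1 / (2 * m) := by
  have hmR : (0 : ℝ) < m := Nat.cast_pos.2 hm
  refine ⟨⟨min ⌊a * m⌋₊ (m - 1), by omega⟩, ?_⟩
  set j := min ⌊a * m⌋₊ (m - 1)
  have hlow : (j : ℝ) ≤ a * m :=
    (Nat.cast_le.2 (min_le_left _ _)).trans (Nat.floor_le (by nlinarith [ha.1]))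
  have hhigh : a * m ≤ j + 1 := by
    rcases le_total ⌊a * m⌋₊ (m - 1) with hc | hc
    · rw [show j = ⌊a * m⌋₊ from min_eq_left hc]; exact (Nat.lt_floor_add_one _).le
    · rw [show j = m - 1 from min_eq_right hc, Nat.cast_sub hm]; push_cast; nlinarith [ha.2]
  calc |a - (j + 1 / 2) / m| = |a * m - (j + 1 / 2)| / m := by
        rw [← abs_of_pos hmR, ← abs_div, abs_of_pos hmR]; field_simp
    _ ≤ (1 / 2) / m := by gcongr; exact abs_le.2 ⟨by linarith, by linarith⟩
    _ = 1 / (2 * m) := by ring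

noncomputable def cubeCellCenter {d m : ℕ} (k : Fin d → Fin m) : EuclideanSpace ℝ (Fin d) :=
  WithLp.toLp 2 fun i => ((k i : ℝ) + 1 / 2) / m

theorem exists_dist_cubeCellCenter_le {d m : ℕ} (hm : 0 < m) {x : EuclideanSpace ℝ (Fin d)}
    (hx : ∀ i, x i ∈ Set.Icc (0 : ℝ) 1) :
    ∃ k : Fin d → Fin m, dist x (cubeCellCenter k) ≤ √d / (2 * m) := by
  choose k hk using fun i => exists_fin_abs_sub_midpoint_le (hx i) hm
  have hdist := EuclideanSpace.dist_le_sqrt_card_mul (y := cubeCellCenter k) (by positivity) hk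
  exact ⟨k, by rwa [Fintype.card_fin, mul_one_div] at hdist⟩

theorem lintegral_one_sub_measure_closedBall_pow_le_of_unitCube {d : ℕ}
    (ρ : Measure (EuclideanSpace ℝ (Fin d))) [IsProbabilityMeasure ρ]
    (hcube : ∀ᵐ x ∂ρ, ∀ i, x i ∈ Set.Icc (0 : ℝ) 1) {h : ℝ} (hh : 0 < h) (hhd : h ≤ √d)
    {N : ℕ} (hN : 0 < N) :
    ∫⁻ x, (1 - ρ (closedBall x h)) ^ N ∂ρ ≤ ENNReal.ofReal ((2 * √d) ^ d / (N * h ^ d)) := by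
  set m := ⌈√d / h⌉₊
  have hdh : 1 ≤ √d / h := (one_le_div hh).2 hhd
  have hm : 0 < m := Nat.ceil_pos.2 (by linarith)
  have hmh : √d / (2 * m) ≤ h / 2 := by
    rw [div_le_div_iff₀ (by positivity) two_pos]
    nlinarith [(div_le_iff₀ hh).1 (Nat.le_ceil (√d / h))]
  have hcover : ∀ᵐ x ∂ρ, x ∈ ⋃ k : Fin d → Fin m, closedBall (cubeCellCenter k) (h / 2) :=
    hcube.mono fun x hx => by
      obtain ⟨k, hk⟩ := exists_dist_cubeCellCenter_le hm hx
      exact Set.mem_iUnion.2 ⟨k, hk.trans hmh⟩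
  have hmle : (m : ℝ) ≤ 2 * √d / h :=
    (Nat.ceil_le_two_mul (by linarith)).trans_eq (mul_div_assoc _ _ _).symm
  calc ∫⁻ x, (1 - ρ (closedBall x h)) ^ N ∂ρ
      ≤ Fintype.card (Fin d → Fin m) * (N : ℝ≥0∞)⁻¹ :=
        lintegral_one_sub_measure_closedBall_pow_le ρ hcover N
    _ = ENNReal.ofReal (m ^ d / N) := by
        rw [ENNReal.ofReal_div_of_pos (by positivity), div_eq_mul_inv]; simp
    _ ≤ ENNReal.ofReal ((2 * √d / h) ^ d / N) := by gcongr
    _ = ENNReal.ofReal ((2 * √d) ^ d / (N * h ^ d)) := by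
        rw [div_pow]; congr 1; field_simp

theorem stmt19_general (d : ℕ) :
    ∃ c > 0, ∀ K : Set (EuclideanSpace ℝ (Fin d)), IsCompact K →
      (∀ x ∈ K, ∀ i, x i ∈ Set.Icc (0 : ℝ) 1) →
      ∀ ρX : Measure (EuclideanSpace ℝ (Fin d)), IsProbabilityMeasure ρX → ρX K = 1 →
      ∀ (N : ℕ) (h : ℝ), 0 < N → 0 < h →
      (((Measure.pi fun _ : Fin (N + 1) => ρX)
            {ω | ∀ i : Fin N, ω i.castSucc ∉ closedBall (ω (Fin.last N)) h}).toReal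
          ≤ ∫ x, (1 - (ρX (closedBall x h)).toReal) ^ N ∂ρX)
      ∧ ∫ x, (1 - (ρX (closedBall x h)).toReal) ^ N ∂ρX ≤ c / (N * h ^ d) := by
  refine ⟨(2 * √d) ^ d, ?_, fun K hK hKcube ρ _ hρK N h hN hh => ?_⟩
  · rcases d.eq_zero_or_pos with rfl | hd
    · simp
    · positivity
  have hKae : ∀ᵐ x ∂ρ, x ∈ K :=
    (ae_mem_iff_measure_eq hK.measurableSet.nullMeasurableSet).2 (by rw [hρK, measure_univ])
  rw [integral_one_sub_measure_closedBall_pow, ← measure_pi_forall_notMem_closedBall]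
  refine ⟨le_rfl, ENNReal.toReal_le_of_le_ofReal (by positivity) ?_⟩
  rw [measure_pi_forall_notMem_closedBall]
  rcases le_or_gt h √d with hsmall | hlarge
  · exact lintegral_one_sub_measure_closedBall_pow_le_of_unitCube ρ (hKae.mono hKcube) hh
      hsmall hN
  -- `diam [0,1]^d = √d < h`, so `B_h(x) ⊇ K` for `x ∈ K`
  refine (lintegral_one_sub_measure_closedBall_pow_eq_zero ρ ?_ hN.ne').trans_le zero_le
  filter_upwards [hKae] with x hx
  refine le_antisymm prob_le_one (hρK ▸ measure_mono fun y hy => ?_)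
  refine (EuclideanSpace.dist_le_sqrt_card_mul zero_le_one fun i => ?_).trans
    (by simpa using hlarge.le)
  exact abs_sub_le_of_nonneg_of_le (hKcube y hy i).1 (hKcube y hy i).2 (hKcube x hx i).1
    (hKcube x hx i).2

/-- `X := ω (Fin.last N)` is the independent test point and `ω i.castSucc`,
`i : Fin N`, are the samples; all are i.i.d. with law `ρX`. -/
theorem stmt19 (d : ℕ) (hd : 0 < d) :
    ∃ c > 0, ∀ K : Set (EuclideanSpace ℝ (Fin d)), IsCompact K →
      (∀ x ∈ K, ∀ i, x i ∈ Set.Icc (0 : ℝ) 1) →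
      ∀ ρX : Measure (EuclideanSpace ℝ (Fin d)), IsProbabilityMeasure ρX → ρX K = 1 →
      ∀ (N : ℕ) (h : ℝ), 0 < N → 0 < h →
      (((Measure.pi fun _ : Fin (N + 1) => ρX)
            {ω | ∀ i : Fin N, ω i.castSucc ∉ closedBall (ω (Fin.last N)) h}).toReal
          ≤ ∫ x, (1 - (ρX (closedBall x h)).toReal) ^ N ∂ρX)
      ∧ ∫ x, (1 - (ρX (closedBall x h)).toReal) ^ N ∂ρX ≤ c / (N * h ^ d) :=
  stmt19_general d
end
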